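/- Let X subset R^n be nonempty compact convex and, for each mu in R^m_+, let x(mu) = argmin_{x in X} L(x, mu) where L(x, mu) = f(x) + (alpha/2)||x||^2 + mu^T g(x), with f convex C^1, g convex C^1 componentwise, alpha > 0, and ||grad g(x)||_2 <= M_g on X (operator norm of the Jacobian). Then for any mu_1, mu_2 in R^m_+: (mu_2 - mu_1)^T (g(x(mu_1)) - g(x(mu_2))) >= (alpha/M_g^2) ||g(x(mu_1)) - g(x(mu_2))||^2, and ||mu_1 - mu_2|| >= (alpha/M_g) ||x(mu_1) - x(mu_2)||. -/

import Mathlib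

/-!
Adding `(α/2)‖·‖²` makes the convex function `f + ⟪μ, g ·⟫` `α`-strongly convex, so it grows
quadratically away from its minimizer over `X`: `L(x(μ), μ) + (α/2)‖x(μ) - y‖² ≤ L(y, μ)` for
`y ∈ X`. Adding this at `(μ₁, x(μ₂))` and at `(μ₂, x(μ₁))` gives
`α‖x(μ₁) - x(μ₂)‖² ≤ ⟪μ₂ - μ₁, g(x(μ₁)) - g(x(μ₂))⟫`. Both claims follow from this with the mean
value bound `‖g(x(μ₁)) - g(x(μ₂))‖ ≤ M_g‖x(μ₁) - x(μ₂)‖` on the convex set `X`, the second one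
after Cauchy–Schwarz.
-/

open scoped RealInnerProductSpace
open Set Filter Topology

lemma convexOn_finset_sum {E ι : Type*} [AddCommGroup E] [Module ℝ E] {s : Set E}
    (hs : Convex ℝ s) (t : Finset ι) {h : ι → E → ℝ} (hh : ∀ i ∈ t, ConvexOn ℝ s (h i)) :
    ConvexOn ℝ s (fun x => ∑ i ∈ t, h i x) := by
  classical
  induction t using Finset.induction_on with
  | empty => simpa using convexOn_const 0 hs
  | insert i t hi ih =>
    simp_rw [Finset.sum_insert hi]
    exact (hh i (t.mem_insert_self i)).add (ih fun j hj => hh j (Finset.mem_insert_of_mem hj))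

lemma convexOn_inner_of_nonneg {E ι : Type*} [AddCommGroup E] [Module ℝ E] [Fintype ι]
    {s : Set E} (hs : Convex ℝ s) {g : E → EuclideanSpace ℝ ι}
    (hg : ∀ j, ConvexOn ℝ s (fun x => g x j)) {μ : EuclideanSpace ℝ ι} (hμ : ∀ j, 0 ≤ μ j) :
    ConvexOn ℝ s (fun x => ⟪μ, g x⟫) := by
  simp_rw [PiLp.inner_apply, RCLike.inner_apply, conj_trivial]
  exact convexOn_finset_sum hs _ fun j _ => by
    simpa only [mul_comm, smul_eq_mul] using (hg j).smul (hμ j)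

lemma StrongConvexOn.add_sq_norm_sub_le_of_isMinOn {E : Type*} [NormedAddCommGroup E]
    [NormedSpace ℝ E] {s : Set E} {m : ℝ} {φ : E → ℝ} {x y : E}
    (hφ : StrongConvexOn s m φ) (hmin : IsMinOn φ s x) (hx : x ∈ s) (hy : y ∈ s) :
    φ x + m / 2 * ‖x - y‖ ^ 2 ≤ φ y := by
  set c := m / 2 * ‖x - y‖ ^ 2
  have hseg : ∀ t ∈ Ioo (0 : ℝ) 1, φ x + (1 - t) * c ≤ φ y := by
    rintro t ⟨ht₀, ht₁⟩
    have hconv := hφ.2 hx hy (sub_nonneg.2 ht₁.le) ht₀.le (sub_add_cancel 1 t)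
    have hle := isMinOn_iff.1 hmin _ (hφ.1 hx hy (sub_nonneg.2 ht₁.le) ht₀.le (sub_add_cancel 1 t))
    simp only [smul_eq_mul] at hconv
    have : t * (φ x + (1 - t) * c) ≤ t * φ y := by linear_combination hle + hconv
    exact le_of_mul_le_mul_left this ht₀
  have hlim : Tendsto (fun t : ℝ => φ x + (1 - t) * c) (𝓝[>] 0) (𝓝 (φ x + c)) := by
    refine tendsto_nhdsWithin_of_tendsto_nhds ?_
    exact (by fun_prop : Continuous fun t : ℝ => φ x + (1 - t) * c).tendsto' 0 _ (by simp)
  exact le_of_tendsto hlim (by filter_upwards [Ioo_mem_nhdsGT one_pos] with t ht using hseg t ht)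

lemma div_mul_le_of_mul_sq_le {a M d N : ℝ} (hM : 0 < M) (hd : 0 ≤ d) (hN : 0 ≤ N)
    (h : a * d ^ 2 ≤ N * (M * d)) : a / M * d ≤ N := by
  rcases hd.eq_or_lt with rfl | hd
  · simpa using hN
  · rw [div_mul_eq_mul_div, div_le_iff₀ hM]
    nlinarith

section InnerProductSpace

variable {E H : Type*} [NormedAddCommGroup E] [InnerProductSpace ℝ E]
  [NormedAddCommGroup H] [InnerProductSpace ℝ H]

lemma ConvexOn.strongConvexOn_add_sq_norm {s : Set E} {m : ℝ} {h : E → ℝ}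
    (hh : ConvexOn ℝ s h) : StrongConvexOn s m (fun x => h x + m / 2 * ‖x‖ ^ 2) :=
  strongConvexOn_iff_convex.2 (by simpa only [add_sub_cancel_right] using hh)

lemma mul_sq_norm_sub_le_inner_of_isMinOn {s : Set E} {m : ℝ} {F : E → ℝ} {G : E → H}
    {μ₁ μ₂ : H} {x₁ x₂ : E}
    (hc₁ : ConvexOn ℝ s (fun x => F x + ⟪μ₁, G x⟫))
    (hc₂ : ConvexOn ℝ s (fun x => F x + ⟪μ₂, G x⟫))
    (hmin₁ : IsMinOn (fun x => F x + m / 2 * ‖x‖ ^ 2 + ⟪μ₁, G x⟫) s x₁)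
    (hmin₂ : IsMinOn (fun x => F x + m / 2 * ‖x‖ ^ 2 + ⟪μ₂, G x⟫) s x₂)
    (hx₁ : x₁ ∈ s) (hx₂ : x₂ ∈ s) :
    m * ‖x₁ - x₂‖ ^ 2 ≤ ⟪μ₂ - μ₁, G x₁ - G x₂⟫ := by
  have hreorder : ∀ μ : H, (fun x => F x + m / 2 * ‖x‖ ^ 2 + ⟪μ, G x⟫)
      = fun x => F x + ⟪μ, G x⟫ + m / 2 * ‖x‖ ^ 2 := fun μ => funext fun x => by ring
  rw [hreorder] at hmin₁ hmin₂
  have h₁ := hc₁.strongConvexOn_add_sq_norm.add_sq_norm_sub_le_of_isMinOn hmin₁ hx₁ hx₂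
  have h₂ := hc₂.strongConvexOn_add_sq_norm.add_sq_norm_sub_le_of_isMinOn hmin₂ hx₂ hx₁
  rw [norm_sub_rev x₂] at h₂
  simp only [inner_sub_left, inner_sub_right] at h₁ h₂ ⊢
  linarith

end InnerProductSpace

theorem stmt15_general (n m : ℕ) (X : Set (EuclideanSpace ℝ (Fin n)))
    (hXconv : Convex ℝ X)
    (f : EuclideanSpace ℝ (Fin n) → ℝ)
    (hfconv : ConvexOn ℝ Set.univ f)
    (g : EuclideanSpace ℝ (Fin n) → EuclideanSpace ℝ (Fin m))
    (hgconv : ∀ j, ConvexOn ℝ Set.univ (fun x => g x j)) (hg : ContDiff ℝ 1 g)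
    (α : ℝ) (hα : 0 < α) (Mg : ℝ) (hMg : 0 < Mg)
    (hJac : ∀ x ∈ X, ‖fderiv ℝ g x‖ ≤ Mg)
    (xmu : EuclideanSpace ℝ (Fin m) → EuclideanSpace ℝ (Fin n))
    (hxmu : ∀ μ : EuclideanSpace ℝ (Fin m), (∀ j, 0 ≤ μ j) →
      xmu μ ∈ X ∧ ∀ y ∈ X,
        f (xmu μ) + α/2 * ‖xmu μ‖^2 + ⟪μ, g (xmu μ)⟫
          ≤ f y + α/2 * ‖y‖^2 + ⟪μ, g y⟫)
    (μ₁ μ₂ : EuclideanSpace ℝ (Fin m)) (hμ₁ : ∀ j, 0 ≤ μ₁ j) (hμ₂ : ∀ j, 0 ≤ μ₂ j) :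
    (α / Mg^2) * ‖g (xmu μ₁) - g (xmu μ₂)‖^2
        ≤ ⟪μ₂ - μ₁, g (xmu μ₁) - g (xmu μ₂)⟫ ∧
    (α / Mg) * ‖xmu μ₁ - xmu μ₂‖ ≤ ‖μ₁ - μ₂‖ := by
  obtain ⟨hx₁, hmin₁⟩ := hxmu μ₁ hμ₁
  obtain ⟨hx₂, hmin₂⟩ := hxmu μ₂ hμ₂
  have hconv : ∀ μ : EuclideanSpace ℝ (Fin m), (∀ j, 0 ≤ μ j) →
      ConvexOn ℝ X (fun x => f x + ⟪μ, g x⟫) := fun μ hμ =>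
    (hfconv.add (convexOn_inner_of_nonneg convex_univ hgconv hμ)).subset (subset_univ X) hXconv
  have hmono := mul_sq_norm_sub_le_inner_of_isMinOn (hconv μ₁ hμ₁) (hconv μ₂ hμ₂)
    (isMinOn_iff.2 hmin₁) (isMinOn_iff.2 hmin₂) hx₁ hx₂
  have hLip : ‖g (xmu μ₁) - g (xmu μ₂)‖ ≤ Mg * ‖xmu μ₁ - xmu μ₂‖ :=
    hXconv.norm_image_sub_le_of_norm_fderiv_le
      (fun x _ => (hg.differentiable one_ne_zero).differentiableAt) hJac hx₂ hx₁
  refine ⟨?_, div_mul_le_of_mul_sq_le hMg (norm_nonneg _) (norm_nonneg _) ?_⟩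
  · calc α / Mg ^ 2 * ‖g (xmu μ₁) - g (xmu μ₂)‖ ^ 2
        ≤ α / Mg ^ 2 * (Mg * ‖xmu μ₁ - xmu μ₂‖) ^ 2 := by gcongr
      _ = α * ‖xmu μ₁ - xmu μ₂‖ ^ 2 := by field_simp
      _ ≤ _ := hmono
  · calc α * ‖xmu μ₁ - xmu μ₂‖ ^ 2 ≤ ⟪μ₂ - μ₁, g (xmu μ₁) - g (xmu μ₂)⟫ := hmono
      _ ≤ ‖μ₂ - μ₁‖ * ‖g (xmu μ₁) - g (xmu μ₂)‖ := real_inner_le_norm _ _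
      _ ≤ ‖μ₁ - μ₂‖ * (Mg * ‖xmu μ₁ - xmu μ₂‖) := by rw [norm_sub_rev]; gcongr

/-- cocoercivity-type lemma. With `x(μ) = argmin_{x ∈ X} L(x,μ)`,
`L(x,μ) = f(x) + (α/2)‖x‖² + ⟪μ, g(x)⟫`, `‖Dg(x)‖ ≤ M_g` on `X`, then for
`μ₁, μ₂ ∈ ℝᵐ₊`:
`⟪μ₂ - μ₁, g(x(μ₁)) - g(x(μ₂))⟫ ≥ (α/M_g²)‖g(x(μ₁)) - g(x(μ₂))‖²` and
`‖μ₁ - μ₂‖ ≥ (α/M_g)‖x(μ₁) - x(μ₂)‖`. -/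
theorem stmt15 (n m : ℕ) (X : Set (EuclideanSpace ℝ (Fin n)))
    (hXne : X.Nonempty) (hXcpt : IsCompact X) (hXconv : Convex ℝ X)
    (f : EuclideanSpace ℝ (Fin n) → ℝ)
    (hfconv : ConvexOn ℝ Set.univ f) (hf : ContDiff ℝ 1 f)
    (g : EuclideanSpace ℝ (Fin n) → EuclideanSpace ℝ (Fin m))
    (hgconv : ∀ j, ConvexOn ℝ Set.univ (fun x => g x j)) (hg : ContDiff ℝ 1 g)
    (α : ℝ) (hα : 0 < α) (Mg : ℝ) (hMg : 0 < Mg)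
    (hJac : ∀ x ∈ X, ‖fderiv ℝ g x‖ ≤ Mg)
    (xmu : EuclideanSpace ℝ (Fin m) → EuclideanSpace ℝ (Fin n))
    (hxmu : ∀ μ : EuclideanSpace ℝ (Fin m), (∀ j, 0 ≤ μ j) →
      xmu μ ∈ X ∧ ∀ y ∈ X,
        f (xmu μ) + α/2 * ‖xmu μ‖^2 + ⟪μ, g (xmu μ)⟫
          ≤ f y + α/2 * ‖y‖^2 + ⟪μ, g y⟫)
    (μ₁ μ₂ : EuclideanSpace ℝ (Fin m)) (hμ₁ : ∀ j, 0 ≤ μ₁ j) (hμ₂ : ∀ j, 0 ≤ μ₂ j) :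
    (α / Mg^2) * ‖g (xmu μ₁) - g (xmu μ₂)‖^2
        ≤ ⟪μ₂ - μ₁, g (xmu μ₁) - g (xmu μ₂)⟫ ∧
    (α / Mg) * ‖xmu μ₁ - xmu μ₂‖ ≤ ‖μ₁ - μ₂‖ :=
  stmt15_general n m X hXconv f hfconv g hgconv hg α hα Mg hMg hJac xmu hxmu μ₁ μ₂ hμ₁ hμ₂
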